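/- (Proposition A.2) For any crossover design d in the class Λ_{t+1,n,p} with 3 ≤ p ≤ t+1, one has Σ_{u=1}^n n_{d0u}·ñ_{d0u} ≤ t·(n(p−1) − r̃_{d0}). -/

import Mathlib

open Finset

/-- Number of periods (among the `p` periods, 0-indexed `0,…,p-1`) in which unit `u`
receives treatment `i` under design `d`. -/
def nC (d : ℕ → ℕ → ℕ) (p i u : ℕ) : ℕ :=
  ((Finset.range p).filter fun k => d k u = i).card

/-- Number of periods among the first `p-1` periods in which unit `u` receives
treatment `i` under design `d`. -/
def nT (d : ℕ → ℕ → ℕ) (p i u : ℕ) : ℕ :=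
  ((Finset.range (p - 1)).filter fun k => d k u = i).card

/-- Number of units (among `n` units) receiving treatment `i` in period `k`. -/
def lC (d : ℕ → ℕ → ℕ) (n i k : ℕ) : ℕ :=
  ((Finset.range n).filter fun u => d k u = i).card

/-- Number of appearances of treatment `i` immediately preceded by treatment `j`. -/
def mC (d : ℕ → ℕ → ℕ) (p n i j : ℕ) : ℕ :=
  ∑ u ∈ Finset.range n,
    ((Finset.range (p - 1)).filter fun k => d (k + 1) u = i ∧ d k u = j).card

/-- Total replication of treatment `i` in the design. -/
def rC (d : ℕ → ℕ → ℕ) (p n i : ℕ) : ℕ := ∑ u ∈ Finset.range n, nC d p i u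

/-- Total replication of treatment `i` in the first `p-1` periods. -/
def rT (d : ℕ → ℕ → ℕ) (p n i : ℕ) : ℕ := ∑ u ∈ Finset.range n, nT d p i u

/-!
Double counting gives `∑ᵤ n_{d0u} ñ_{d0u} = ∑_{k < p, k' < p - 1} #{u : d(k,u) = d(k',u) = 0}`.
Since the control never follows itself, each period `k` has a neighbour `k' < p - 1` sharing no
control unit with it, while every other term is at most `l_{d0k}`; hence the sum is at most
`(p - 2) r_{d0}`. In `Λ_{t+1,n,p}` every period holds the same number `L` of controls, so
`r_{d0} = pL`, `r̃_{d0} = (p - 1)L`, and two consecutive periods give `2L ≤ n`. The claim then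
reduces to `p (p - 2) < (p - 1)² ≤ t (p - 1)`.
-/

namespace Crossover

variable {d : ℕ → ℕ → ℕ} {n p i : ℕ}

def lPair (d : ℕ → ℕ → ℕ) (n i k k' : ℕ) : ℕ :=
  ((range n).filter fun u => d k u = i ∧ d k' u = i).card

lemma sum_card_filter_eq_sum_lC (m : ℕ) :
    ∑ u ∈ range n, ((range m).filter fun k => d k u = i).card = ∑ k ∈ range m, lC d n i k := by
  simp only [lC, card_filter]
  exact sum_comm

lemma rC_eq_sum_lC : rC d p n i = ∑ k ∈ range p, lC d n i k :=
  sum_card_filter_eq_sum_lC p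

lemma rT_eq_sum_lC : rT d p n i = ∑ k ∈ range (p - 1), lC d n i k :=
  sum_card_filter_eq_sum_lC (p - 1)

lemma sum_nC_mul_nT_eq_sum_lPair :
    ∑ u ∈ range n, nC d p i u * nT d p i u =
      ∑ k ∈ range p, ∑ k' ∈ range (p - 1), lPair d n i k k' := by
  simp only [nC, nT, lPair, card_filter, sum_mul_sum, ← ite_and, mul_ite, mul_one, mul_zero]
  rw [sum_comm]
  refine sum_congr rfl fun _ _ => ?_
  rw [sum_comm]
  simp only [and_comm]

lemma lPair_le_lC (k k' : ℕ) : lPair d n i k k' ≤ lC d n i k :=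
  card_le_card (monotone_filter_right _ fun _ _ h => h.1)

lemma lPair_comm (k k' : ℕ) : lPair d n i k k' = lPair d n i k' k := by
  simp only [lPair, and_comm]

lemma lPair_succ_eq_zero (hm : mC d p n i i = 0) {k : ℕ} (hk : k < p - 1) :
    lPair d n i (k + 1) k = 0 := by
  simp only [mC, sum_eq_zero_iff, mem_range] at hm
  simp only [lPair, card_eq_zero, filter_eq_empty_iff, mem_range]
  intro u hu hcon
  have hmu := hm u hu
  rw [card_eq_zero, filter_eq_empty_iff] at hmu
  exact hmu (mem_range.mpr hk) hcon

lemma exists_lPair_eq_zero (hp : 3 ≤ p) (hm : mC d p n i i = 0) {k : ℕ} (hk : k < p) :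
    ∃ k' < p - 1, lPair d n i k k' = 0 := by
  rcases k with _ | k
  · exact ⟨1, by omega, by rw [lPair_comm]; exact lPair_succ_eq_zero hm (by omega)⟩
  · exact ⟨k, by omega, lPair_succ_eq_zero hm (by omega)⟩

lemma sum_lPair_le (hp : 3 ≤ p) (hm : mC d p n i i = 0) {k : ℕ} (hk : k < p) :
    ∑ k' ∈ range (p - 1), lPair d n i k k' ≤ (p - 2) * lC d n i k := by
  obtain ⟨a, ha, hzero⟩ := exists_lPair_eq_zero hp hm hk
  rw [← add_sum_erase _ _ (mem_range.mpr ha), hzero, zero_add]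
  calc ∑ k' ∈ (range (p - 1)).erase a, lPair d n i k k'
      ≤ ∑ _k' ∈ (range (p - 1)).erase a, lC d n i k := sum_le_sum fun k' _ => lPair_le_lC k k'
    _ = (p - 2) * lC d n i k := by
      rw [sum_const, card_erase_of_mem (mem_range.mpr ha), card_range, smul_eq_mul]
      rfl

lemma sum_nC_mul_nT_le (hp : 3 ≤ p) (hm : mC d p n i i = 0) :
    ∑ u ∈ range n, nC d p i u * nT d p i u ≤ (p - 2) * rC d p n i := by
  rw [sum_nC_mul_nT_eq_sum_lPair, rC_eq_sum_lC, mul_sum]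
  exact sum_le_sum fun k hk => sum_lPair_le hp hm (mem_range.mp hk)

lemma lC_add_lC_succ_le (hm : mC d p n i i = 0) {k : ℕ} (hk : k < p - 1) :
    lC d n i k + lC d n i (k + 1) ≤ n := by
  have hdisj : Disjoint ((range n).filter fun u => d k u = i)
      ((range n).filter fun u => d (k + 1) u = i) := by
    rw [disjoint_filter]
    intro u hu hk0 hk1
    have hzero : lPair d n i (k + 1) k = 0 := lPair_succ_eq_zero hm hk
    rw [lPair, card_eq_zero, filter_eq_empty_iff] at hzero
    exact hzero hu ⟨hk1, hk0⟩
  rw [lC, lC, ← card_union_of_disjoint hdisj]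
  simpa using card_le_card (union_subset (filter_subset _ (range n)) (filter_subset _ _))

lemma sub_two_mul_add_le {t p L : ℕ} (hp : 3 ≤ p) (hpt : p ≤ t + 1) (hL : 2 * L ≤ n) :
    (p - 2) * (p * L) + t * ((p - 1) * L) ≤ t * (n * (p - 1)) := by
  have hcoef : (p - 2) * p ≤ t * (p - 1) := by
    obtain ⟨m, rfl⟩ : ∃ m, p = m + 3 := ⟨p - 3, by omega⟩
    calc (m + 3 - 2) * (m + 3) ≤ (m + 2) * (m + 2) := by rw [show m + 3 - 2 = m + 1 by omega]; nlinarith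
      _ ≤ t * (m + 3 - 1) := by rw [show m + 3 - 1 = m + 2 by omega]; gcongr; omega
  calc (p - 2) * (p * L) + t * ((p - 1) * L) = (p - 2) * p * L + t * (p - 1) * L := by ring
    _ ≤ t * (p - 1) * L + t * (p - 1) * L := by gcongr
    _ = t * (p - 1) * (2 * L) := by ring
    _ ≤ t * (p - 1) * n := by gcongr
    _ = t * (n * (p - 1)) := by ring

end Crossover

open Crossover in
theorem stmt6_general (t n p : ℕ) (hp : 3 ≤ p) (hpt : p ≤ t + 1)
    (d : ℕ → ℕ → ℕ)
    (hper : ∀ k < p, p * lC d n 0 k = rC d p n 0)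
    (hself : ∀ i ≤ t, mC d p n i i = 0) :
    ∑ u ∈ Finset.range n, nC d p 0 u * nT d p 0 u + t * rT d p n 0 ≤ t * (n * (p - 1)) := by
  have hm : mC d p n 0 0 = 0 := hself 0 t.zero_le
  set L := lC d n 0 0
  have hL : ∀ k < p, lC d n 0 k = L := fun k hk =>
    Nat.eq_of_mul_eq_mul_left (by omega) ((hper k hk).trans (hper 0 (by omega)).symm)
  have hrC : rC d p n 0 = p * L := (hper 0 (by omega)).symm
  have hrT : rT d p n 0 = (p - 1) * L := by
    rw [rT_eq_sum_lC, sum_congr rfl fun k hk => hL k (by simp at hk; omega), sum_const,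
      card_range, smul_eq_mul]
  have h2L : 2 * L ≤ n := by
    have h := lC_add_lC_succ_le hm (k := 0) (by omega)
    rw [hL 1 (by omega)] at h
    omega
  calc _ ≤ (p - 2) * rC d p n 0 + t * rT d p n 0 := by gcongr; exact sum_nC_mul_nT_le hp hm
    _ ≤ t * (n * (p - 1)) := by
      rw [hrC, hrT]
      exact sub_two_mul_add_le hp hpt h2L

/-- Proposition A.2: for any design in the class `Λ_{t+1,n,p}` with `3 ≤ p ≤ t+1`,
`∑_u n_{d0u}·ñ_{d0u} ≤ t·(n(p-1) − r̃_{d0})` (stated additively in `ℕ`). -/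
theorem stmt6 (t n p : ℕ) (ht : 0 < t) (hn : 0 < n) (hp : 3 ≤ p) (hpt : p ≤ t + 1)
    (d : ℕ → ℕ → ℕ) (hd : ∀ k < p, ∀ u < n, d k u ≤ t)
    (hper : ∀ k < p, p * lC d n 0 k = rC d p n 0)
    (hself : ∀ i ≤ t, mC d p n i i = 0) :
    ∑ u ∈ Finset.range n, nC d p 0 u * nT d p 0 u + t * rT d p n 0 ≤ t * (n * (p - 1)) :=
  stmt6_general t n p hp hpt d hper hself
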